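/- arXiv:hep-th/9210042 — 5 statements merged into one kernel-verified Lean document; each statement's English description precedes it below -/
import Mathlib

section
/- In the braided Heisenberg group BH_q(1), generated by α, β, δ with relations αβ − βα = ωα, αδ − δα = 0, βδ − δβ = ωδ, the braided antipode defined on generators by S(α) = −α, S(β) = −β + αδ, S(δ) = −δ, extended via S(ab) = ·(S⊗S)Ψ(a⊗b) where Ψ is the braiding given in the paper (transposition on all pairs of generators except Ψ(β⊗β) = β⊗β + ωα⊗δ), is consistent with the defining relations. -/
/-- In the braided Heisenberg group BH_q(1), generated by α, β, δ with relations
`αβ − βα = ωα`, `αδ − δα = 0`, `βδ − δβ = ωδ`, the braided antipode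
`S(α) = −α`, `S(β) = −β + αδ`, `S(δ) = −δ`, extended via
`S(ab) = ·(S⊗S)Ψ(a⊗b)` with the braiding Ψ acting as transposition on all pairs of
generators (except `Ψ(β⊗β) = β⊗β + ω α⊗δ`, which does not occur in the relations),
is consistent with the defining relations.  Since Ψ transposes the relevant pairs,
this amounts to: `S(β)S(α) − S(α)S(β) = ωS(α)` (from the first relation),
`S(δ)S(α) − S(α)S(δ) = 0` (from the second), and
`S(δ)S(β) − S(β)S(δ) = ωS(δ)` (from the third). -/
theorem braided_heisenberg_antipode_consistent (k : Type*) [CommRing k]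
    (A : Type*) [Ring A] [Algebra k A] (ω : k) (α β δ : A)
    (h1 : α * β - β * α = ω • α)
    (h2 : α * δ - δ * α = 0)
    (h3 : β * δ - δ * β = ω • δ) :
    (-β + α * δ) * (-α) - (-α) * (-β + α * δ) = ω • (-α) ∧
    (-δ) * (-α) - (-α) * (-δ) = 0 ∧
    (-δ) * (-β + α * δ) - (-β + α * δ) * (-δ) = ω • (-δ) := by
  refine ⟨?_, ?_, ?_⟩
  · have : (-β + α * δ) * (-α) - (-α) * (-β + α * δ)
        = -(α * β - β * α) + α * (α * δ - δ * α) := by noncomm_ring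
    rw [this, h1, h2]; simp
  · have : (-δ) * (-α) - (-α) * (-δ) = -(α * δ - δ * α) := by noncomm_ring
    rw [this, h2]; simp
  · have : (-δ) * (-β + α * δ) - (-β + α * δ) * (-δ)
        = -(β * δ - δ * β) + (α * δ - δ * α) * δ := by noncomm_ring
    rw [this, h2, h3]; simp
end

section
/- In the extended braided Heisenberg group with generators α, β, δ, γ, γ⁻¹ (γ central, γγ⁻¹ = 1) and relations αβ − βα = ωα, αδ − δα = ω(γ − 1), βδ − δβ = ωδ, the elements S(α) = −γ⁻¹α, S(β) = −β + γ⁻¹αδ, S(δ) = −γ⁻¹δ, S(γ) = γ⁻¹ satisfy the antipode axiom m∘(S⊗id)∘Δ = ε·1 on the generators, where Δ is the matrix coproduct for T = [[1, α, β],[0, γ, δ],[0,0,1]], namely Δα = 1⊗α + α⊗γ, Δβ = 1⊗β + α⊗δ + β⊗1, Δδ = γ⊗δ + δ⊗1, Δγ = γ⊗γ, and ε(α) = ε(β) = ε(δ) = 0, ε(γ) = 1. -/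
/-- In the extended braided Heisenberg group, generated by α, β, δ, γ, γ⁻¹ with γ, γ⁻¹
central, `γγ⁻¹ = γ⁻¹γ = 1`, and relations `αβ − βα = ωα`, `αδ − δα = ω(γ − 1)`,
`βδ − δβ = ωδ`, the antipode values `S(α) = −γ⁻¹α`, `S(β) = −β + γ⁻¹αδ`,
`S(δ) = −γ⁻¹δ`, `S(γ) = γ⁻¹` satisfy the antipode axiom
`m∘(S⊗id)∘Δ(x) = ε(x)·1` for the matrix coproduct `Δα = α⊗γ + 1⊗α`,
`Δβ = β⊗1 + α⊗δ + 1⊗β`, `Δδ = δ⊗1 + γ⊗δ`, `Δγ = γ⊗γ`, with `ε(α)=ε(β)=ε(δ)=0`,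
`ε(γ)=1`:  explicitly `S(α)γ + S(1)α = 0`, `S(β)·1 + S(α)δ + S(1)β = 0`,
`S(δ)·1 + S(γ)δ = 0`, and `S(γ)γ = 1`. -/
theorem extended_braided_heisenberg_antipode_axiom (k : Type*) [CommRing k]
    (A : Type*) [Ring A] [Algebra k A] (ω : k) (α β δ γ γi : A)
    (hγc : ∀ x : A, γ * x = x * γ)
    (hγic : ∀ x : A, γi * x = x * γi)
    (hγγi : γ * γi = 1) (hγiγ : γi * γ = 1)
    (h1 : α * β - β * α = ω • α)
    (h2 : α * δ - δ * α = ω • (γ - 1))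
    (h3 : β * δ - δ * β = ω • δ) :
    (-(γi * α)) * γ + 1 * α = 0 ∧
    (-β + γi * α * δ) * 1 + (-(γi * α)) * δ + 1 * β = 0 ∧
    (-(γi * δ)) * 1 + γi * δ = 0 ∧
    γi * γ = 1 := by
  refine ⟨?_, by noncomm_ring, by noncomm_ring, hγiγ⟩
  have h : γi * α * γ = α := by
    rw [mul_assoc, ← hγc α, ← mul_assoc, hγiγ, one_mul]
  rw [neg_mul, h]; noncomm_ring
end

section
/- The assignment α ↦ ω e^{−ωH/4}A†, β ↦ −ωN, γ ↦ e^{−ωH}, δ ↦ ω e^{−ωH/4}A defines an algebra homomorphism from the extended braided Heisenberg group (relations αβ − βα = ωα, αδ − δα = ω(γ−1), βδ − δβ = ωδ, γ central) to U_q(h); i.e., the images satisfy all the defining relations. -/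
/-- The assignment `α ↦ ω e^{−ωH/4}A†`, `β ↦ −ωN`, `γ ↦ e^{−ωH}`,
`δ ↦ ω e^{−ωH/4}A` defines an algebra homomorphism from the extended braided
Heisenberg group (relations `αβ − βα = ωα`, `αδ − δα = ω(γ−1)`, `βδ − δβ = ωδ`,
γ central) to U_q(h): the images satisfy all the defining relations.  Here
`E c` denotes the central grouplike element `e^{cωH}` with `E c · E c' = E (c+c')`
and `E 0 = 1`. -/
theorem braided_heisenberg_to_Uqh_hom (A : Type*) [Ring A] [Algebra ℂ A]
    (ω : ℂ) (hω : ω ≠ 0) (a ad n : A) (E : ℚ → A)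
    (hEadd : ∀ c c', E c * E c' = E (c + c')) (hE0 : E 0 = 1)
    (hEc : ∀ c (x : A), E c * x = x * E c)
    (hrel1 : a * ad - ad * a = ω⁻¹ • (E (1/2) - E (-(1/2))))
    (hrel2 : n * a - a * n = -a) (hrel3 : n * ad - ad * n = ad) :
    (ω • (E (-(1/4)) * ad)) * ((-ω) • n) - ((-ω) • n) * (ω • (E (-(1/4)) * ad))
        = ω • (ω • (E (-(1/4)) * ad)) ∧
    (ω • (E (-(1/4)) * ad)) * (ω • (E (-(1/4)) * a))
        - (ω • (E (-(1/4)) * a)) * (ω • (E (-(1/4)) * ad))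
        = ω • (E (-1) - 1) ∧
    ((-ω) • n) * (ω • (E (-(1/4)) * a)) - (ω • (E (-(1/4)) * a)) * ((-ω) • n)
        = ω • (ω • (E (-(1/4)) * a)) ∧
    (∀ x : A, E (-1) * x = x * E (-1)) := by
  refine ⟨?_, ?_, ?_, fun x => hEc _ x⟩
  · have h : E (-(1/4)) * ad * n - n * (E (-(1/4)) * ad) = -(E (-(1/4)) * ad) := by
      rw [show n * (E (-(1/4)) * ad) = E (-(1/4)) * (n * ad) by
        rw [← mul_assoc, ← hEc, mul_assoc]]
      rw [mul_assoc, ← mul_sub, show ad * n - n * ad = -ad by rw [← neg_sub, hrel3]]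
      rw [mul_neg]
    calc (ω • (E (-(1/4)) * ad)) * ((-ω) • n) - ((-ω) • n) * (ω • (E (-(1/4)) * ad))
        = (-(ω*ω)) • (E (-(1/4)) * ad * n - n * (E (-(1/4)) * ad)) := by
          simp [smul_mul_assoc, mul_smul_comm, smul_smul, smul_sub]
      _ = ω • (ω • (E (-(1/4)) * ad)) := by rw [h, smul_neg, smul_smul, neg_smul, neg_neg]
  · have h : E (-(1/4)) * ad * (E (-(1/4)) * a) - E (-(1/4)) * a * (E (-(1/4)) * ad)
        = E (-(1/2)) * (ad * a - a * ad) := by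
      rw [show E (-(1/4)) * ad * (E (-(1/4)) * a) = E (-(1/2)) * (ad * a) by
          rw [← mul_assoc, mul_assoc (E (-(1/4))) ad, ← hEc, ← mul_assoc, hEadd,
            mul_assoc]; norm_num,
        show E (-(1/4)) * a * (E (-(1/4)) * ad) = E (-(1/2)) * (a * ad) by
          rw [← mul_assoc, mul_assoc (E (-(1/4))) a, ← hEc, ← mul_assoc, hEadd,
            mul_assoc]; norm_num, ← mul_sub]
    calc (ω • (E (-(1/4)) * ad)) * (ω • (E (-(1/4)) * a))
          - (ω • (E (-(1/4)) * a)) * (ω • (E (-(1/4)) * ad))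
        = (ω*ω) • (E (-(1/4)) * ad * (E (-(1/4)) * a)
            - E (-(1/4)) * a * (E (-(1/4)) * ad)) := by
          simp [smul_mul_assoc, mul_smul_comm, smul_smul, smul_sub]
      _ = ω • (E (-1) - 1) := by
          rw [h, show ad * a - a * ad = -(ω⁻¹ • (E (1/2) - E (-(1/2)))) by
            rw [← neg_sub, hrel1]]
          rw [mul_neg, mul_smul_comm, smul_neg, smul_smul,
            show ω * ω * ω⁻¹ = ω by field_simp]
          rw [mul_sub, hEadd, hEadd]
          norm_num [hE0]
          rw [← smul_neg, neg_sub]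
  · have h : n * (E (-(1/4)) * a) - E (-(1/4)) * a * n = -(E (-(1/4)) * a) := by
      rw [show n * (E (-(1/4)) * a) = E (-(1/4)) * (n * a) by
        rw [← mul_assoc, ← hEc, mul_assoc]]
      rw [mul_assoc, ← mul_sub, hrel2, mul_neg]
    calc ((-ω) • n) * (ω • (E (-(1/4)) * a)) - (ω • (E (-(1/4)) * a)) * ((-ω) • n)
        = (-(ω*ω)) • (n * (E (-(1/4)) * a) - E (-(1/4)) * a * n) := by
          simp [smul_mul_assoc, mul_smul_comm, smul_smul, smul_sub]
      _ = ω • (ω • (E (-(1/4)) * a)) := by rw [h, smul_neg, smul_smul, neg_smul, neg_neg]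
end

section
/- Let n ∈ ℕ and consider the braided n-fold tensor product algebra with generators Ā_i, Ā†_i, N̄_i, H̄_i (1 ≤ i ≤ n), where H̄_i are central, [Ā_i, Ā_i] = 0, [Ā†_i, Ā†_j] = 0 for all i,j, [Ā_i, Ā†_j] = ω e^{−ωH̄_i/4}[H̄_i] e^{−ωH̄_j/4}[H̄_j] if i < j, [Ā_i, Ā†_i] = [H̄_i], and [Ā_i, Ā†_j] = 0 if i > j (together with the N̄ relations). Define X†_i = e^{(ω/2)(H̄_1+⋯+H̄_{i−1})} Ā†_i − ω [H̄_i] e^{−ωH̄_i/4} Σ_{j=1}^{i−1} e^{(ω/2)(H̄_1+⋯+H̄_{j−1})} e^{ωH̄_j/4} e^{−(ω/2)(H̄_{j+1}+⋯+H̄_{i−1})} Ā†_j and X_i = e^{−(ω/2)(H̄_1+⋯+H̄_{i−1})} Ā_i. Then [X_i, X†_j] = δ_{ij}[H̄_i] for all i, j. -/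
open Finset

private lemma tele_sum {M : Type*} [AddCommGroup M] (f : ℕ → M) {a b : ℕ} (h : a ≤ b) :
    ∑ m ∈ Ico a b, (f (m + 1) - f m) = f b - f a := by
  induction b, h using Nat.le_induction with
  | base => simp
  | succ b hb ih => rw [Finset.sum_Ico_succ_top (by omega), ih]; abel

private lemma key_center {R : Type*} [CommRing R] {n : ℕ} (E : Fin n → ℚ → R)
    (hEadd : ∀ k c c', E k c * E k c' = E k (c + c')) (hE0 : ∀ k, E k 0 = 1)
    {i j : Fin n} (hij : i < j) :
    (∏ k ∈ Iio i, E k (-(1/2))) * (∏ k ∈ Iio j, E k (1/2)) *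
        (E i (-(1/4)) * (E i (1/2) - E i (-(1/2))) * E j (-(1/4)) *
          (E j (1/2) - E j (-(1/2))))
      = (∏ k ∈ Iio i, E k (-(1/2))) *
          ((E j (1/2) - E j (-(1/2))) * E j (-(1/4)) *
            (((∏ k ∈ Iio i, E k (1/2)) * E i (1/4) * (∏ k ∈ Ioo i j, E k (-(1/2)))) *
                (E i (1/2) - E i (-(1/2)))
              + ∑ l ∈ Ioo i j,
                  ((∏ k ∈ Iio l, E k (1/2)) * E l (1/4) * (∏ k ∈ Ioo l j, E k (-(1/2)))) *
                    (E i (-(1/4)) * (E i (1/2) - E i (-(1/2))) * E l (-(1/4)) *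
                      (E l (1/2) - E l (-(1/2)))))) := by
  set h : ℕ → R := fun m =>
    (∏ k ∈ (Iio j).filter fun k : Fin n => (k : ℕ) < m, E k (1/2)) *
      ∏ k ∈ (Iio j).filter fun k : Fin n => ¬ (k : ℕ) < m, E k (-(1/2)) with hh
  have hlo1 : ∀ l : Fin n, l < j →
      (Iio j).filter (fun k : Fin n => (k : ℕ) < (l : ℕ) + 1) = Iic l := by
    intro l hl
    ext k
    simp only [mem_filter, mem_Iio, mem_Iic, Fin.lt_def, Fin.le_def]
    have := Fin.lt_def.mp hl
    omega
  have hhi1 : ∀ l : Fin n, l < j →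
      (Iio j).filter (fun k : Fin n => ¬ (k : ℕ) < (l : ℕ) + 1) = Ioo l j := by
    intro l hl
    ext k
    simp only [mem_filter, mem_Iio, mem_Ioo, Fin.lt_def]
    omega
  have hlo : ∀ l : Fin n, l ≤ j →
      (Iio j).filter (fun k : Fin n => (k : ℕ) < (l : ℕ)) = Iio l := by
    intro l hl
    ext k
    simp only [mem_filter, mem_Iio, Fin.lt_def]
    have := Fin.le_def.mp hl
    omega
  have hhi : ∀ l : Fin n, l ≤ j →
      (Iio j).filter (fun k : Fin n => ¬ (k : ℕ) < (l : ℕ)) = Ico l j := by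
    intro l hl
    ext k
    simp only [mem_filter, mem_Iio, mem_Ico, Fin.lt_def, Fin.le_def]
    omega
  have hA : h (j : ℕ) = ∏ k ∈ Iio j, E k (1/2) := by
    simp only [hh]
    rw [filter_true_of_mem, filter_false_of_mem, prod_empty, mul_one]
    · intro k hk
      simpa using Fin.lt_def.mp (mem_Iio.mp hk)
    · intro k hk
      exact Fin.lt_def.mp (mem_Iio.mp hk)
  have hB : h ((i : ℕ) + 1)
      = E i (1/4) * ((∏ k ∈ Iio i, E k (1/2)) * E i (1/4) * ∏ k ∈ Ioo i j, E k (-(1/2))) := by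
    simp only [hh]
    rw [hlo1 i hij, hhi1 i hij, ← Finset.Iio_insert, prod_insert (by simp)]
    have h14 : E i (1/4) * E i (1/4) = E i (1/2) := by
      rw [hEadd]; norm_num
    linear_combination ((∏ k ∈ Iio i, E k (1/2)) * ∏ k ∈ Ioo i j, E k (-(1/2))) * h14.symm
  have hC : ∀ l ∈ Ioo i j,
      ((∏ k ∈ Iio l, E k (1/2)) * E l (1/4) * ∏ k ∈ Ioo l j, E k (-(1/2))) *
          (E l (-(1/4)) * (E l (1/2) - E l (-(1/2))))
        = h ((l : ℕ) + 1) - h (l : ℕ) := by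
    intro l hl
    obtain ⟨hil, hlj⟩ := mem_Ioo.mp hl
    simp only [hh]
    rw [hlo1 l hlj, hhi1 l hlj, hlo l hlj.le, hhi l hlj.le, ← Finset.Iio_insert,
      prod_insert (by simp), ← Finset.Ioo_insert_left hlj, prod_insert (by simp)]
    have h1 : E l (1/4) * E l (-(1/4)) = 1 := by
      rw [hEadd]
      norm_num [hE0]
    linear_combination ((∏ k ∈ Iio l, E k (1/2)) * (∏ k ∈ Ioo l j, E k (-(1/2))) *
      (E l (1/2) - E l (-(1/2)))) * h1
  have htel : ∑ l ∈ Ioo i j, (h ((l : ℕ) + 1) - h (l : ℕ)) = h (j : ℕ) - h ((i : ℕ) + 1) := by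
    have hmap := Finset.sum_map (Ioo i j) Fin.valEmbedding (fun m => h (m + 1) - h m)
    simp only [Fin.valEmbedding_apply, Fin.map_valEmbedding_Ioo] at hmap
    rw [← hmap, show Ioo (i : ℕ) (j : ℕ) = Ico ((i : ℕ) + 1) (j : ℕ) from rfl,
      tele_sum h (by exact Fin.lt_def.mp hij)]
  have main : (∏ k ∈ Iio j, E k (1/2))
      = E i (1/4) * ((∏ k ∈ Iio i, E k (1/2)) * E i (1/4) * ∏ k ∈ Ioo i j, E k (-(1/2)))
        + ∑ l ∈ Ioo i j,
            ((∏ k ∈ Iio l, E k (1/2)) * E l (1/4) * ∏ k ∈ Ioo l j, E k (-(1/2))) *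
              (E l (-(1/4)) * (E l (1/2) - E l (-(1/2)))) := by
    rw [Finset.sum_congr rfl hC, htel, hB, ← hA]
    ring
  have h1 : E i (-(1/4)) * E i (1/4) = 1 := by
    rw [hEadd]
    norm_num [hE0]
  have hpull : ∑ l ∈ Ioo i j,
      ((∏ k ∈ Iio l, E k (1/2)) * E l (1/4) * (∏ k ∈ Ioo l j, E k (-(1/2)))) *
        (E i (-(1/4)) * (E i (1/2) - E i (-(1/2))) * E l (-(1/4)) * (E l (1/2) - E l (-(1/2))))
      = (E i (-(1/4)) * (E i (1/2) - E i (-(1/2)))) *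
          ∑ l ∈ Ioo i j,
            ((∏ k ∈ Iio l, E k (1/2)) * E l (1/4) * ∏ k ∈ Ioo l j, E k (-(1/2))) *
              (E l (-(1/4)) * (E l (1/2) - E l (-(1/2)))) := by
    rw [Finset.mul_sum]
    exact Finset.sum_congr rfl fun l _ => by ring
  rw [hpull, main]
  linear_combination ((∏ k ∈ Iio i, E k (-(1/2))) * (E i (1/2) - E i (-(1/2))) * E j (-(1/4)) *
    (E j (1/2) - E j (-(1/2))) *
    ((∏ k ∈ Iio i, E k (1/2)) * E i (1/4) * ∏ k ∈ Ioo i j, E k (-(1/2)))) * h1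

private lemma comm_expand {A : Type*} [Ring A] (z w p q : A)
    (hz : ∀ x, z * x = x * z) (hw : ∀ x, w * x = x * w) :
    z * p * (w * q) - w * q * (z * p) = z * w * (p * q - q * p) := by
  have h1 : z * p * (w * q) = z * w * (p * q) := by
    rw [mul_assoc z p, ← mul_assoc p w, ← hw p, mul_assoc w p, ← mul_assoc z w]
  have h2 : w * q * (z * p) = z * w * (q * p) := by
    rw [mul_assoc w q, ← mul_assoc q z, ← hz q, mul_assoc z q, ← mul_assoc w z, ← hz w]
  rw [h1, h2, ← mul_sub]

/-- In the braided n-fold tensor product algebra of `BU_q(h)`, with generators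
`Ā_i, Ā†_i, N̄_i` and central grouplike exponentials `E i c = e^{cωH̄_i}` (valued in
the center), with `[H̄_i] = (1/ω)(e^{ωH̄_i/2} − e^{−ωH̄_i/2})`, the braided
relations are: the `Ā_i` mutually commute, the `Ā†_i` mutually commute,
`[Ā_i, Ā†_j] = ω e^{−ωH̄_i/4}[H̄_i] e^{−ωH̄_j/4}[H̄_j]` for `i < j`, `= [H̄_i]` for
`i = j`, `= 0` for `i > j`, together with the `N̄` relations.  Define
`X_i = e^{−(ω/2)(H̄_1+⋯+H̄_{i−1})} Ā_i` and
`X†_i = e^{(ω/2)(H̄_1+⋯+H̄_{i−1})} Ā†_i − ω[H̄_i]e^{−ωH̄_i/4}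
  Σ_{j<i} e^{(ω/2)(H̄_1+⋯+H̄_{j−1})} e^{ωH̄_j/4} e^{−(ω/2)(H̄_{j+1}+⋯+H̄_{i−1})} Ā†_j`.
Then `[X_i, X†_j] = δ_{ij}[H̄_i]` for all i, j. -/
theorem braided_X_commutator (A : Type*) [Ring A] [Algebra ℂ A]
    (n : ℕ) (ω : ℂ) (hω : ω ≠ 0)
    (a ad nN : Fin n → A) (E : Fin n → ℚ → Subring.center A)
    (hEadd : ∀ i c c', (E i c : A) * (E i c' : A) = (E i (c + c') : A))
    (hE0 : ∀ i, E i 0 = 1)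
    (brH : Fin n → A)
    (hbrH : ∀ i, brH i = ω⁻¹ • ((E i (1/2) : A) - (E i (-(1/2)) : A)))
    (haa : ∀ i j, a i * a j = a j * a i)
    (hadad : ∀ i j, ad i * ad j = ad j * ad i)
    (hmix : ∀ i j, a i * ad j - ad j * a i =
      if i = j then brH i
      else if i < j then
        ω • ((E i (-(1/4)) : A) * brH i * (E j (-(1/4)) : A) * brH j)
      else 0)
    (hNa : ∀ i j, nN i * a j - a j * nN i =
      if i < j then 0
      else if i = j then -(a i)
      else ω • ((E j (-(1/4)) : A) * brH j * (E i (-(1/4)) : A) * a i))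
    (hNad : ∀ i j, nN i * ad j - ad j * nN i =
      if i < j then ω • ((E i (-(1/4)) : A) * ad i * (E j (-(1/4)) : A) * brH j)
      else if i = j then ad i
      else 0)
    (hNN : ∀ i j, i ≤ j → nN i * nN j - nN j * nN i =
      if i < j then ω • ((E i (-(1/4)) : A) * ad i * (E j (-(1/4)) : A) * a j)
      else 0)
    (X Xd : Fin n → A)
    (hX : ∀ i, X i = ((∏ k ∈ Iio i, E k (-(1/2)) : Subring.center A) : A) * a i)
    (hXd : ∀ i, Xd i =
      ((∏ k ∈ Iio i, E k (1/2) : Subring.center A) : A) * ad i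
        - ω • (brH i * (E i (-(1/4)) : A) *
            ∑ j ∈ Iio i,
              ((∏ k ∈ Iio j, E k (1/2) : Subring.center A) : A) * (E j (1/4) : A) *
                ((∏ k ∈ Ioo j i, E k (-(1/2)) : Subring.center A) : A) * ad j)) :
    ∀ i j, X i * Xd j - Xd j * X i = if i = j then brH i else 0 := by
  intro i j
  have hzc : ∀ (z : Subring.center A) (x : A), (z : A) * x = x * z :=
    fun z x => (Subring.mem_center_iff.mp z.2 x).symm
  have cmul : ∀ {u v : A}, (∀ y, u * y = y * u) → (∀ y, v * y = y * v) →
      ∀ y, (u * v) * y = y * (u * v) := by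
    intro u v hu hv y
    rw [mul_assoc, hv, ← mul_assoc, hu, mul_assoc]
  have cbr : ∀ (k : Fin n) (x : A), brH k * x = x * brH k := by
    intro k x
    rw [hbrH k, smul_mul_assoc, mul_smul_comm, sub_mul, mul_sub, hzc, hzc]
  have hEadd' : ∀ (k : Fin n) (c c' : ℚ), E k c * E k c' = E k (c + c') :=
    fun k c c' => Subtype.ext (hEadd k c c')
  set C : A := ((∏ k ∈ Iio i, E k (-(1/2)) : Subring.center A) : A) with hC
  set D : A := ((∏ k ∈ Iio j, E k (1/2) : Subring.center A) : A) with hD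
  set W : Fin n → A := fun l =>
    ((∏ k ∈ Iio l, E k (1/2) : Subring.center A) : A) * (E l (1/4) : A) *
      ((∏ k ∈ Ioo l j, E k (-(1/2)) : Subring.center A) : A) with hW
  set V : A := brH j * (E j (-(1/4)) : A) with hV
  set S : A := ∑ l ∈ Iio j, W l * ad l with hS
  have cC : ∀ x, C * x = x * C := by intro x; rw [hC]; exact hzc _ x
  have cD : ∀ x, D * x = x * D := by intro x; rw [hD]; exact hzc _ x
  have cW : ∀ l x, W l * x = x * W l := by
    intro l x
    rw [hW]
    exact cmul (cmul (hzc _) (hzc _)) (hzc _) x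
  have cV : ∀ x, V * x = x * V := by
    intro x
    rw [hV]
    exact cmul (cbr j) (hzc _) x
  have hXd' : Xd j = D * ad j - ω • (V * S) := by rw [hXd j, hS, hW]
  have hS1 : a i * S - S * a i = ∑ l ∈ Iio j, W l * (a i * ad l - ad l * a i) := by
    rw [hS, Finset.mul_sum, Finset.sum_mul, ← Finset.sum_sub_distrib]
    refine Finset.sum_congr rfl fun l _ => ?_
    rw [mul_sub]
    congr 1
    · rw [← mul_assoc, ← cW l (a i), mul_assoc]
    · rw [mul_assoc]
  have expand : X i * Xd j - Xd j * X i
      = C * D * (a i * ad j - ad j * a i)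
        - ω • (C * V * ∑ l ∈ Iio j, W l * (a i * ad l - ad l * a i)) := by
    rw [hX i, hXd', mul_sub, sub_mul, sub_sub_sub_comm,
      comm_expand C D (a i) (ad j) cC cD]
    congr 1
    rw [mul_smul_comm, smul_mul_assoc, ← smul_sub]
    congr 1
    rw [comm_expand C V (a i) S cC cV, hS1]
  rcases lt_trichotomy i j with hij | rfl | hij
  · -- i < j
    rw [if_neg hij.ne, expand, hmix i j, if_neg hij.ne, if_pos hij]
    have hunion : Iio i ∪ Ico i j = Iio j := by
      ext k
      simp only [mem_union, mem_Iio, mem_Ico]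
      constructor
      · rintro (h | ⟨-, h⟩)
        · exact lt_trans h hij
        · exact h
      · intro h
        rcases lt_or_ge k i with h' | h'
        · exact Or.inl h'
        · exact Or.inr ⟨h', h⟩
    have hdisj : Disjoint (Iio i) (Ico i j) := by
      refine Finset.disjoint_left.mpr fun k hk hk2 => ?_
      exact absurd (mem_Ico.mp hk2).1 (not_le.mpr (mem_Iio.mp hk))
    have hsum : ∑ l ∈ Iio j, W l * (a i * ad l - ad l * a i)
        = W i * brH i + ∑ l ∈ Ioo i j,
            W l * (ω • ((E i (-(1/4)) : A) * brH i * (E l (-(1/4)) : A) * brH l)) := by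
      rw [← hunion, Finset.sum_union hdisj]
      have h0 : ∑ l ∈ Iio i, W l * (a i * ad l - ad l * a i) = 0 :=
        Finset.sum_eq_zero fun l hl => by
          rw [hmix i l, if_neg (mem_Iio.mp hl).ne', if_neg (not_lt.mpr (mem_Iio.mp hl).le),
            mul_zero]
      rw [h0, zero_add, ← Finset.Ioo_insert_left hij, Finset.sum_insert (by simp),
        hmix i i, if_pos rfl]
      congr 1
      refine Finset.sum_congr rfl fun l hl => ?_
      rw [hmix i l, if_neg (mem_Ioo.mp hl).1.ne, if_pos (mem_Ioo.mp hl).1]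
    rw [hsum, sub_eq_zero]
    -- now reduce scalars and transfer to the center
    have lhs_eq : C * D * (ω • ((E i (-(1/4)) : A) * brH i * (E j (-(1/4)) : A) * brH j))
        = ω⁻¹ • (C * D * ((E i (-(1/4)) : A) * ((E i (1/2) : A) - (E i (-(1/2)) : A)) *
            (E j (-(1/4)) : A) * ((E j (1/2) : A) - (E j (-(1/2)) : A)))) := by
      rw [hbrH i, hbrH j]
      simp only [smul_mul_assoc, mul_smul_comm, smul_smul]
      congr 1
      field_simp
    have hterm : ∀ l : Fin n,
        W l * (ω • ((E i (-(1/4)) : A) * brH i * (E l (-(1/4)) : A) * brH l))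
        = ω⁻¹ • (W l * ((E i (-(1/4)) : A) * ((E i (1/2) : A) - (E i (-(1/2)) : A)) *
            (E l (-(1/4)) : A) * ((E l (1/2) : A) - (E l (-(1/2)) : A)))) := by
      intro l
      rw [hbrH i, hbrH l]
      simp only [smul_mul_assoc, mul_smul_comm, smul_smul]
      congr 1
      field_simp
    have hWi : W i * brH i = ω⁻¹ • (W i * ((E i (1/2) : A) - (E i (-(1/2)) : A))) := by
      rw [hbrH i, mul_smul_comm]
    have rhs_eq : ω • (C * V * (W i * brH i + ∑ l ∈ Ioo i j,
          W l * (ω • ((E i (-(1/4)) : A) * brH i * (E l (-(1/4)) : A) * brH l))))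
        = ω⁻¹ • (C * (((E j (1/2) : A) - (E j (-(1/2)) : A)) * (E j (-(1/4)) : A) *
            (W i * ((E i (1/2) : A) - (E i (-(1/2)) : A))
              + ∑ l ∈ Ioo i j,
                  W l * ((E i (-(1/4)) : A) * ((E i (1/2) : A) - (E i (-(1/2)) : A)) *
                    (E l (-(1/4)) : A) * ((E l (1/2) : A) - (E l (-(1/2)) : A)))))) := by
      rw [Finset.sum_congr rfl fun l _ => hterm l, ← Finset.smul_sum, hWi, ← smul_add,
        hV, hbrH j, mul_assoc C]
      simp only [smul_mul_assoc, mul_smul_comm, smul_smul]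
      congr 1
      field_simp
    rw [lhs_eq, rhs_eq]
    congr 1
    rw [hC, hD]
    simp only [hW]
    exact_mod_cast congrArg Subtype.val (key_center E hEadd' hE0 hij)
  · -- i = j
    rw [if_pos rfl, expand, hmix i i, if_pos rfl]
    have h0 : ∑ l ∈ Iio i, W l * (a i * ad l - ad l * a i) = 0 :=
      Finset.sum_eq_zero fun l hl => by
        rw [hmix i l, if_neg (mem_Iio.mp hl).ne', if_neg (not_lt.mpr (mem_Iio.mp hl).le),
          mul_zero]
    rw [h0, mul_zero, smul_zero, sub_zero]
    have hCD : C * D = 1 := by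
      rw [hC, hD]
      have hprod : (∏ k ∈ Iio i, E k (-(1/2))) * (∏ k ∈ Iio i, E k (1/2)) = 1 := by
        rw [← Finset.prod_mul_distrib]
        refine Finset.prod_eq_one fun k _ => ?_
        rw [hEadd' k, show (-(1/2) + 1/2 : ℚ) = 0 by norm_num, hE0 k]
      exact_mod_cast congrArg Subtype.val hprod
    rw [hCD, one_mul]
  · -- j < i
    rw [if_neg hij.ne', expand, hmix i j, if_neg hij.ne', if_neg (not_lt.mpr hij.le)]
    have h0 : ∑ l ∈ Iio j, W l * (a i * ad l - ad l * a i) = 0 :=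
      Finset.sum_eq_zero fun l hl => by
        rw [hmix i l, if_neg (lt_trans (mem_Iio.mp hl) hij).ne',
          if_neg (not_lt.mpr (lt_trans (mem_Iio.mp hl) hij).le), mul_zero]
    rw [h0, mul_zero, mul_zero, smul_zero, sub_zero]
end

section
/- In the braided upper triangular Heisenberg matrices BT_+(h), with central bosonic elements d and γ and relations αβ − βα = ωdα, αδ − δα = ωd(γ − d), βδ − δβ = ωdδ, the element D = d²γ is central, and the maps S̲(α) = −D⁻¹dα, S̲(β) = −D⁻¹γβ + D⁻¹αδ, S̲(δ) = −D⁻¹dδ, S̲(γ) = D⁻¹d², S̲(d) = D⁻¹dγ satisfy the antipode axiom Σ S̲(u^i_k)u^k_j = δ^i_j · 1 for the matrix U = [[d, α, β],[0, γ, δ],[0, 0, d]], in the algebra with D⁻¹ formally adjoined. -/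
open Matrix

/-- In the braided upper triangular Heisenberg matrices `BT₊(h)`, with central
(bosonic) elements d and γ, relations `αβ − βα = ωdα`, `αδ − δα = ωd(γ − d)`,
`βδ − δβ = ωdδ`, and the braided determinant `D = d²γ` with inverse `D⁻¹` formally
adjoined (central, `DD⁻¹ = 1`), the braided antipode values
`S̲(α) = −D⁻¹dα`, `S̲(β) = −D⁻¹γβ + D⁻¹αδ`, `S̲(δ) = −D⁻¹dδ`, `S̲(γ) = D⁻¹d²`,
`S̲(d) = D⁻¹dγ` satisfy the matrix antipode axiom `Σ_k S̲(u^i_k) u^k_j = δ^i_j · 1`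
for `U = [[d, α, β],[0, γ, δ],[0, 0, d]]`, i.e. `S̲(U) · U = 1`. -/
theorem braided_BTplus_antipode (k : Type*) [CommRing k]
    (A : Type*) [Ring A] [Algebra k A] (ω : k) (α β δ d γ Dinv : A)
    (hdc : ∀ x : A, d * x = x * d)
    (hγc : ∀ x : A, γ * x = x * γ)
    (hDc : ∀ x : A, Dinv * x = x * Dinv)
    (hD : d * d * γ * Dinv = 1)
    (h1 : α * β - β * α = ω • (d * α))
    (h2 : α * δ - δ * α = ω • (d * (γ - d)))
    (h3 : β * δ - δ * β = ω • (d * δ)) :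
    (!![Dinv * d * γ, -(Dinv * d * α), -(Dinv * γ * β) + Dinv * α * δ;
        0, Dinv * d * d, -(Dinv * d * δ);
        0, 0, Dinv * d * γ] *
     !![d, α, β;
        0, γ, δ;
        0, 0, d] : Matrix (Fin 3) (Fin 3) A) = 1 := by
  have hD' : d * (d * (γ * Dinv)) = 1 := by rw [← mul_assoc, ← mul_assoc]; exact hD
  have dl : ∀ x z : A, x * (d * z) = d * (x * z) := fun x z => by
    rw [← mul_assoc, ← hdc, mul_assoc]
  have gr : ∀ x z : A, γ * (x * z) = x * (γ * z) := fun x z => by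
    rw [← mul_assoc, hγc, mul_assoc]
  ext i j
  fin_cases i <;> fin_cases j <;>
    simp [Matrix.mul_apply, Fin.sum_univ_three, Matrix.one_apply, Matrix.vecHead,
      Matrix.vecTail, mul_assoc, add_mul, neg_mul, hDc α, hDc β, hDc δ, hDc γ, hDc d,
      hγc α, hγc β, hγc δ, hγc d, (hdc α).symm, (hdc β).symm, (hdc δ).symm, hD',
      dl α, dl β, dl δ, dl γ, gr α, gr β, gr δ, gr d, gr Dinv,
      add_neg_cancel, neg_add_cancel] <;> abel
end
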